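/- arXiv:1010.4179 — 5 statements merged into one kernel-verified Lean document; each statement's English description precedes it below -/
import Mathlib

section
/- Let F : ℝ^M_{++} → ℝ be continuous and lower unbounded. If for every x̄ ∈ ℝ^M_{++} the upper level set {x ∈ ℝ^M_{++} : F(x) ≥ F(x̄)} is closed in ℝ^M, then F(x⁽ⁿ⁾) → -∞ for every sequence (x⁽ⁿ⁾) in ℝ^M_{++} converging to a point of ∂ℝ^M_{++}. -/
/-- If F : ℝ^M_{++} → ℝ is continuous and lower unbounded, and every
upper level set is closed in ℝ^M, then F diverges to -∞ along every sequence in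
the positive orthant converging to a boundary point. -/
theorem stmt1 (M : ℕ) (F : (Fin M → ℝ) → ℝ)
    (P : Set (Fin M → ℝ)) (hP : P = {x | ∀ i, 0 < x i})
    (hcont : ContinuousOn F P)
    (hlb : ∀ r : ℝ, ∃ x ∈ P, F x < r)
    (hclosed : ∀ xb ∈ P, IsClosed {x | x ∈ P ∧ F xb ≤ F x}) :
    ∀ x : ℕ → (Fin M → ℝ), (∀ n, x n ∈ P) →
      ∀ y ∈ frontier P, Filter.Tendsto x Filter.atTop (nhds y) →
        Filter.Tendsto (fun n => F (x n)) Filter.atTop Filter.atBot := by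
  intro x hx y hy htend
  have hPopen : IsOpen P := by
    rw [hP]
    have : {x : Fin M → ℝ | ∀ i, 0 < x i} = ⋂ i, {x : Fin M → ℝ | 0 < x i} := by
      ext z; simp
    rw [this]
    exact isOpen_iInter_of_finite fun i =>
      (isOpen_Ioi).preimage (continuous_apply i)
  have hyP : y ∉ P := by
    rw [hPopen.frontier_eq] at hy
    exact hy.2
  rw [Filter.tendsto_atBot]
  intro b
  obtain ⟨xb, hxbP, hxb⟩ := hlb b
  have hS := hclosed xb hxbP
  have hyS : y ∉ {x | x ∈ P ∧ F xb ≤ F x} := fun h => hyP h.1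
  have hopen : IsOpen {x | x ∈ P ∧ F xb ≤ F x}ᶜ := hS.isOpen_compl
  have hev : ∀ᶠ n in Filter.atTop, x n ∈ {x | x ∈ P ∧ F xb ≤ F x}ᶜ :=
    htend.eventually (hopen.mem_nhds hyS)
  filter_upwards [hev] with n hn
  have : ¬ (F xb ≤ F (x n)) := fun h => hn ⟨hx n, h⟩
  linarith [not_le.mp this]
end

section
/- Let F : ℝ^M_{++} → ℝ be continuous and lower unbounded. Then F(x⁽ⁿ⁾) → -∞ for every sequence in ℝ^M_{++} converging to the boundary ∂ℝ^M_{++} if and only if for every x̄ ∈ ℝ^M_{++} the set {x ∈ ℝ^M_{++} : F(x) ≥ F(x̄)} is closed in ℝ^M. -/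
/-- Proposition: For F : ℝ^M_{++} → ℝ continuous and lower unbounded,
F diverges to -∞ along every sequence converging to the boundary iff every upper
level set of F is closed in ℝ^M. -/
theorem stmt2 (M : ℕ) (F : (Fin M → ℝ) → ℝ)
    (P : Set (Fin M → ℝ)) (hP : P = {x | ∀ i, 0 < x i})
    (hcont : ContinuousOn F P)
    (hlb : ∀ r : ℝ, ∃ x ∈ P, F x < r) :
    (∀ x : ℕ → (Fin M → ℝ), (∀ n, x n ∈ P) →
      ∀ y ∈ frontier P, Filter.Tendsto x Filter.atTop (nhds y) →
        Filter.Tendsto (fun n => F (x n)) Filter.atTop Filter.atBot) ↔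
    (∀ xb ∈ P, IsClosed {x | x ∈ P ∧ F xb ≤ F x}) := by
  have hPopen : IsOpen P := by
    rw [hP]
    have heq : {x : Fin M → ℝ | ∀ i, 0 < x i} = ⋂ i, {x | 0 < x i} := by
      ext x; simp
    rw [heq]
    exact isOpen_iInter_of_finite fun i => isOpen_lt continuous_const (continuous_apply i)
  constructor
  · intro h xb hxb
    apply IsSeqClosed.isClosed
    intro x p hx hxp
    by_cases hpP : p ∈ P
    · refine ⟨hpP, ?_⟩
      have htend : Filter.Tendsto (fun n => F (x n)) Filter.atTop (nhds (F p)) := by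
        have h1 : Filter.Tendsto x Filter.atTop (nhdsWithin p P) :=
          tendsto_nhdsWithin_of_tendsto_nhds_of_eventually_within x hxp
            (Filter.Eventually.of_forall fun n => (hx n).1)
        exact (hcont p hpP).tendsto.comp h1
      exact ge_of_tendsto htend (Filter.Eventually.of_forall fun n => (hx n).2)
    · have hpf : p ∈ frontier P := by
        rw [hPopen.frontier_eq]
        exact ⟨mem_closure_of_tendsto hxp
          (Filter.Eventually.of_forall fun n => (hx n).1), hpP⟩
      have hdiv := h x (fun n => (hx n).1) p hpf hxp
      obtain ⟨n, hn⟩ := (hdiv.eventually_le_atBot (F xb - 1)).exists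
      linarith [(hx n).2]
  · intro h x hx y hy hxy
    rw [Filter.tendsto_atBot]
    intro r
    obtain ⟨xb, hxb, hxbr⟩ := hlb r
    have hS := h xb hxb
    have hyP : y ∉ P := by
      rw [hPopen.frontier_eq] at hy
      exact hy.2
    have hyS : y ∉ {z | z ∈ P ∧ F xb ≤ F z} := fun h' => hyP h'.1
    have hev : ∀ᶠ n in Filter.atTop, x n ∈ {z | z ∈ P ∧ F xb ≤ F z}ᶜ :=
      hxy (hS.isOpen_compl.mem_nhds hyS)
    filter_upwards [hev] with n hn
    have hn' : ¬ (x n ∈ P ∧ F xb ≤ F (x n)) := hn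
    push_neg at hn'
    exact ((hn' (hx n)).trans hxbr).le
end

section
/- Let u : ℝ^{2C}_{++} → ℝ be continuous and lower unbounded, and let U(x₀,…,x_S) = Σ_{s=1}^S a_s u(x₀,x_s) with a_s ∈ (0,1), Σ a_s = 1. If every upper level set {z ∈ ℝ^{2C}_{++} : u(z) ≥ u(z̄)}, z̄ ∈ ℝ^{2C}_{++}, is closed in ℝ^{2C}, then every upper level set {x ∈ ℝ^{C(S+1)}_{++} : U(x) ≥ U(x̄)}, x̄ ∈ ℝ^{C(S+1)}_{++}, is closed in ℝ^{C(S+1)}. -/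
open Filter Topology

/-- If `u` is lower unbounded on `P2` with closed upper level sets, then along any filter
whose values lie in `P2` but converge to a point outside `P2`, `u` tends to `-∞`. -/
lemma aux9 {E : Type*} [TopologicalSpace E] (u : E → ℝ) (P2 : Set E)
    (hlb : ∀ r : ℝ, ∃ p ∈ P2, u p < r)
    (hclosed : ∀ zb ∈ P2, IsClosed {z | z ∈ P2 ∧ u zb ≤ u z})
    {α : Type*} {l : Filter α} {g : α → E} {p : E}
    (hg : Tendsto g l (𝓝 p)) (hp : p ∉ P2)
    (hmem : ∀ᶠ n in l, g n ∈ P2) :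
    Tendsto (fun n => u (g n)) l atBot := by
  rw [tendsto_atBot]
  intro r
  obtain ⟨zb, hzb, hzbr⟩ := hlb r
  by_contra h
  have hfreq : ∃ᶠ n in l, r < u (g n) := by
    simpa [Filter.not_eventually, not_le] using h
  have hfreq2 : ∃ᶠ n in l, g n ∈ {z | z ∈ P2 ∧ u zb ≤ u z} :=
    (hfreq.and_eventually hmem).mono fun n hn => ⟨hn.2, le_of_lt (hzbr.trans hn.1)⟩
  exact hp ((hclosed zb hzb).mem_of_frequently_of_tendsto hfreq2 hg).1

/-- If u : ℝ^{2C}_{++} → ℝ is continuous, lower unbounded, and all its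
upper level sets are closed in ℝ^{2C}, then all upper level sets of the expected
utility U(x₀,…,x_S) = ∑ₛ aₛ u(x₀,x_s) are closed in ℝ^{C(S+1)}. -/
theorem stmt9 (C S : ℕ) (hC : 1 ≤ C) (hS : 1 ≤ S)
    (a : Fin S → ℝ) (ha : ∀ s, a s ∈ Set.Ioo (0:ℝ) 1) (hsum : ∑ s, a s = 1)
    (u : ((Fin C → ℝ) × (Fin C → ℝ)) → ℝ)
    (P2 : Set ((Fin C → ℝ) × (Fin C → ℝ)))
    (hP2 : P2 = {p | (∀ i, 0 < p.1 i) ∧ (∀ i, 0 < p.2 i)})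
    (PG : Set (Fin (S+1) → (Fin C → ℝ)))
    (hPG : PG = {x | ∀ k i, 0 < x k i})
    (hcont : ContinuousOn u P2)
    (hlb : ∀ r : ℝ, ∃ p ∈ P2, u p < r)
    (hclosed : ∀ zb ∈ P2, IsClosed {z | z ∈ P2 ∧ u zb ≤ u z}) :
    ∀ xb ∈ PG, IsClosed {x | x ∈ PG ∧
      (∑ s : Fin S, a s * u (xb 0, xb s.succ)) ≤ ∑ s : Fin S, a s * u (x 0, x s.succ)} := by
  subst hP2 hPG
  intro xb hxb
  -- openness of the positive orthants
  have hopenF : IsOpen {f : Fin C → ℝ | ∀ i, 0 < f i} := by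
    have : {f : Fin C → ℝ | ∀ i, 0 < f i} = Set.pi Set.univ (fun _ => Set.Ioi (0:ℝ)) := by
      ext f; simp [Set.mem_pi]
    rw [this]
    exact isOpen_set_pi Set.finite_univ (fun _ _ => isOpen_Ioi)
  have hopen2 : IsOpen {p : (Fin C → ℝ) × (Fin C → ℝ) | (∀ i, 0 < p.1 i) ∧ (∀ i, 0 < p.2 i)} :=
    (hopenF.preimage continuous_fst).inter (hopenF.preimage continuous_snd)
  refine isClosed_of_closure_subset ?_
  intro x hx
  set T : Set (Fin (S+1) → (Fin C → ℝ)) :=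
    {x | x ∈ {x : Fin (S+1) → (Fin C → ℝ) | ∀ k i, 0 < x k i} ∧
      (∑ s : Fin S, a s * u (xb 0, xb s.succ)) ≤ ∑ s : Fin S, a s * u (x 0, x s.succ)} with hT
  have hne : (𝓝[T] x).NeBot := mem_closure_iff_nhdsWithin_neBot.mp hx
  set l := 𝓝[T] x with hl
  haveI := hne
  have hev : ∀ᶠ z in l, (∀ k i, 0 < z k i) ∧
      (∑ s : Fin S, a s * u (xb 0, xb s.succ)) ≤ ∑ s : Fin S, a s * u (z 0, z s.succ) :=
    eventually_mem_nhdsWithin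
  have hgl : ∀ s : Fin S,
      Tendsto (fun z : Fin (S+1) → Fin C → ℝ => (z 0, z s.succ)) l (𝓝 (x 0, x s.succ)) :=
    fun s => (((continuous_apply (0 : Fin (S+1))).prodMk
      (continuous_apply s.succ)).tendsto x).mono_left nhdsWithin_le_nhds
  by_cases hxP : ∀ k i, 0 < x k i
  · refine ⟨hxP, ?_⟩
    have hterm : ∀ s : Fin S,
        Tendsto (fun z : Fin (S+1) → Fin C → ℝ => a s * u (z 0, z s.succ)) l
          (𝓝 (a s * u (x 0, x s.succ))) := by
      intro s
      have hmem : (x 0, x s.succ) ∈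
          {p : (Fin C → ℝ) × (Fin C → ℝ) | (∀ i, 0 < p.1 i) ∧ (∀ i, 0 < p.2 i)} :=
        ⟨fun i => hxP 0 i, fun i => hxP s.succ i⟩
      have hc := (hcont.continuousAt (hopen2.mem_nhds hmem)).tendsto
      exact (hc.comp (hgl s)).const_mul (a s)
    have hsumT : Tendsto (fun z : Fin (S+1) → Fin C → ℝ =>
        ∑ s : Fin S, a s * u (z 0, z s.succ)) l
        (𝓝 (∑ s : Fin S, a s * u (x 0, x s.succ))) :=
      tendsto_finset_sum _ (fun s _ => hterm s)
    exact ge_of_tendsto hsumT (hev.mono fun z hz => hz.2)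
  · exfalso
    push_neg at hxP
    obtain ⟨k, i, hki⟩ := hxP
    have hbad : ∃ sb : Fin S, (x 0, x sb.succ) ∉
        {p : (Fin C → ℝ) × (Fin C → ℝ) | (∀ i, 0 < p.1 i) ∧ (∀ i, 0 < p.2 i)} := by
      rcases Fin.eq_zero_or_eq_succ k with hk | ⟨j, hk⟩
      · subst hk
        exact ⟨⟨0, hS⟩, fun h => absurd (h.1 i) (not_lt.2 hki)⟩
      · subst hk
        exact ⟨j, fun h => absurd (h.2 i) (not_lt.2 hki)⟩
    obtain ⟨sb, hsb⟩ := hbad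
    have hmemP : ∀ s : Fin S, ∀ᶠ z in l, (z 0, z s.succ) ∈
        {p : (Fin C → ℝ) × (Fin C → ℝ) | (∀ i, 0 < p.1 i) ∧ (∀ i, 0 < p.2 i)} :=
      fun s => hev.mono fun z hz => ⟨fun i => hz.1 0 i, fun i => hz.1 s.succ i⟩
    have hbt : Tendsto (fun z : Fin (S+1) → Fin C → ℝ => u (z 0, z sb.succ)) l atBot :=
      aux9 u _ hlb hclosed (hgl sb) hsb (hmemP sb)
    have hbound : ∀ s : Fin S, ∃ b : ℝ,
        ∀ᶠ z in l, a s * u (z 0, z s.succ) ≤ b := by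
      intro s
      by_cases hs : (x 0, x s.succ) ∈
          {p : (Fin C → ℝ) × (Fin C → ℝ) | (∀ i, 0 < p.1 i) ∧ (∀ i, 0 < p.2 i)}
      · have hc := (hcont.continuousAt (hopen2.mem_nhds hs)).tendsto
        have ht := (hc.comp (hgl s)).const_mul (a s)
        exact ⟨a s * u (x 0, x s.succ) + 1,
          ht.eventually (eventually_le_nhds (lt_add_one _))⟩
      · have ht := aux9 u _ hlb hclosed (hgl s) hs (hmemP s)
        have ht2 : Tendsto (fun z : Fin (S+1) → Fin C → ℝ =>
            a s * u (z 0, z s.succ)) l atBot := ht.const_mul_atBot (ha s).1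
        exact ⟨0, tendsto_atBot.mp ht2 0⟩
    choose b hb using hbound
    have hUbt : Tendsto (fun z : Fin (S+1) → Fin C → ℝ =>
        ∑ s : Fin S, a s * u (z 0, z s.succ)) l atBot := by
      rw [tendsto_atBot]
      intro r
      set B : ℝ := ∑ s ∈ Finset.univ.erase sb, b s with hB
      have h1 : ∀ᶠ z in l, a sb * u (z 0, z sb.succ) ≤ r - B :=
        tendsto_atBot.mp (hbt.const_mul_atBot (ha sb).1) (r - B)
      have h2 : ∀ᶠ z in l, ∀ s : Fin S, a s * u (z 0, z s.succ) ≤ b s :=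
        eventually_all.mpr hb
      filter_upwards [h1, h2] with z hz1 hz2
      have hsplit : ∑ s : Fin S, a s * u (z 0, z s.succ) =
          (∑ s ∈ Finset.univ.erase sb, a s * u (z 0, z s.succ)) +
            a sb * u (z 0, z sb.succ) :=
        (Finset.sum_erase_add _ _ (Finset.mem_univ sb)).symm
      rw [hsplit]
      calc (∑ s ∈ Finset.univ.erase sb, a s * u (z 0, z s.succ)) +
            a sb * u (z 0, z sb.succ)
          ≤ B + (r - B) :=
            add_le_add (Finset.sum_le_sum fun s _ => hz2 s) hz1
        _ = r := by ring
    have hlt : ∀ᶠ z in l, (∑ s : Fin S, a s * u (z 0, z s.succ)) <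
        ∑ s : Fin S, a s * u (xb 0, xb s.succ) :=
      hUbt.eventually (eventually_lt_atBot _)
    obtain ⟨z, hz1, hz2⟩ := (hlt.and hev).exists
    exact absurd hz2.2 (not_le.2 hz1)
end

section
/- Let u : ℝ^{2C}_{++} → ℝ be lower unbounded and U(x₀,…,x_S) = Σ_{s=1}^S a_s u(x₀,x_s) with a_s ∈ (0,1), Σ a_s = 1. Then U satisfies the four classical conditions — (i) C², (ii) strictly positive gradient everywhere, (iii) v·D²U(x)·v < 0 for all nonzero v, (iv) all upper level sets closed in ℝ^{C(S+1)} — if and only if u satisfies the analogous four conditions on ℝ^{2C}_{++}. -/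
/-!
Both directions rest on two linear maps: `pairProj s x = (x₀, x_s)`, through which
`U = ∑ₛ aₛ · u ∘ pairProj s`, and the embedding `pairLift (y, z) = (y, z, …, z)`, through which
`u = U ∘ pairLift` because `∑ₛ aₛ = 1`. Smoothness, first and second derivatives are transported
along these maps by the chain rule, and positivity of `aₛ` turns termwise signs into signs of `U`.

For the upper level sets of `U`, closedness alone does not pass to finite sums. Together with
lower unboundedness, however, closed upper level sets of `u` force `u → -∞` at the boundary of
its domain; then one term of `U` tends to `-∞` at any boundary point of the domain of `U` while the
others stay bounded above, so `U → -∞` there too, which makes its upper level sets closed.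
-/

/-- Second derivative quadratic form of `f` on the set `s`: v ↦ v·D²f(x)·v. -/
noncomputable def hessQF {E : Type*} [NormedAddCommGroup E] [NormedSpace ℝ E]
    (f : E → ℝ) (s : Set E) (x v : E) : ℝ :=
  fderivWithin ℝ (fun y => fderivWithin ℝ f s y v) s x v

open Filter Set Topology

section Calculus

variable {E F G ι : Type*} [NormedAddCommGroup E] [NormedSpace ℝ E]
  [NormedAddCommGroup F] [NormedSpace ℝ F] [NormedAddCommGroup G] [NormedSpace ℝ G]
  [Fintype ι] {T : Set E} {S : Set F}

theorem fderivWithin_comp_clm_apply {f : E → G} (L : F →L[ℝ] E) {x : F}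
    (hf : DifferentiableWithinAt ℝ f T (L x)) (hmaps : MapsTo L S T)
    (hS : UniqueDiffWithinAt ℝ S x) (v : F) :
    fderivWithin ℝ (fun y => f (L y)) S x v = fderivWithin ℝ f T (L x) (L v) := by
  rw [fderivWithin_fun_comp (g := f) x hf L.differentiableWithinAt hmaps hS, L.fderivWithin hS]
  rfl

theorem fderivWithin_sum_mul_apply (a : ι → ℝ) {f : ι → E → ℝ} {x : E}
    (hf : ∀ i, DifferentiableWithinAt ℝ (f i) T x) (hT : UniqueDiffWithinAt ℝ T x) (v : E) :
    fderivWithin ℝ (fun y => ∑ i, a i * f i y) T x v = ∑ i, a i * fderivWithin ℝ (f i) T x v := by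
  rw [fderivWithin_fun_sum hT fun i _ => (hf i).const_mul (a i)]
  simp [fderivWithin_const_mul hT (hf _)]

theorem differentiableOn_fderivWithin_apply {f : E → ℝ} (hf : ContDiffOn ℝ 2 f T)
    (hT : UniqueDiffOn ℝ T) (w : E) :
    DifferentiableOn ℝ (fun p => fderivWithin ℝ f T p w) T :=
  ((hf.fderivWithin hT (m := 1) (by norm_num)).differentiableOn one_ne_zero).clm_apply
    (differentiableOn_const w)

theorem hessQF_zero (f : E → ℝ) (s : Set E) (x : E) : hessQF f s x 0 = 0 :=
  map_zero _

theorem hessQF_comp_clm {f : E → ℝ} (L : F →L[ℝ] E) (hf : ContDiffOn ℝ 2 f T)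
    (hT : UniqueDiffOn ℝ T) (hS : UniqueDiffOn ℝ S) (hmaps : MapsTo L S T) {x : F} (hx : x ∈ S)
    (v : F) : hessQF (fun y => f (L y)) S x v = hessQF f T (L x) (L v) := by
  have hdf : DifferentiableOn ℝ f T := hf.differentiableOn (by norm_num)
  unfold hessQF
  rw [fderivWithin_congr' (fun y hy => fderivWithin_comp_clm_apply L (hdf _ (hmaps hy)) hmaps
    (hS y hy) v) hx]
  exact fderivWithin_comp_clm_apply L (differentiableOn_fderivWithin_apply hf hT _ _ (hmaps hx))
    hmaps (hS x hx) v

theorem hessQF_sum_mul (a : ι → ℝ) {f : ι → E → ℝ} (hf : ∀ i, ContDiffOn ℝ 2 (f i) T)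
    (hT : UniqueDiffOn ℝ T) {x : E} (hx : x ∈ T) (v : E) :
    hessQF (fun y => ∑ i, a i * f i y) T x v = ∑ i, a i * hessQF (f i) T x v := by
  unfold hessQF
  rw [fderivWithin_congr' (fun y hy => fderivWithin_sum_mul_apply a
    (fun i => (hf i).differentiableOn (by norm_num) y hy) (hT y hy) v) hx]
  exact fderivWithin_sum_mul_apply a
    (fun i => differentiableOn_fderivWithin_apply (hf i) hT v x hx) (hT x hx) v

theorem fderivWithin_sum_mul_comp_clm_apply (a : ι → ℝ) {f : E → ℝ} (L : ι → F →L[ℝ] E)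
    (hf : DifferentiableOn ℝ f T) (hS : UniqueDiffOn ℝ S) (hmaps : ∀ i, MapsTo (L i) S T)
    {x : F} (hx : x ∈ S) (v : F) :
    fderivWithin ℝ (fun y => ∑ i, a i * f (L i y)) S x v
      = ∑ i, a i * fderivWithin ℝ f T (L i x) (L i v) := by
  rw [fderivWithin_sum_mul_apply a (f := fun i y => f (L i y))
    (fun i => (hf.comp (L i).differentiableOn (hmaps i)) x hx) (hS x hx)]
  exact Finset.sum_congr rfl fun i _ => by
    rw [fderivWithin_comp_clm_apply (L i) (hf _ (hmaps i hx)) (hmaps i) (hS x hx)]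

theorem hessQF_sum_mul_comp_clm (a : ι → ℝ) {f : E → ℝ} (L : ι → F →L[ℝ] E)
    (hf : ContDiffOn ℝ 2 f T) (hT : UniqueDiffOn ℝ T) (hS : UniqueDiffOn ℝ S)
    (hmaps : ∀ i, MapsTo (L i) S T) {x : F} (hx : x ∈ S) (v : F) :
    hessQF (fun y => ∑ i, a i * f (L i y)) S x v = ∑ i, a i * hessQF f T (L i x) (L i v) := by
  rw [hessQF_sum_mul a (f := fun i y => f (L i y))
    (fun i => hf.comp (L i).contDiff.contDiffOn (hmaps i)) hS hx]
  exact Finset.sum_congr rfl fun i _ => by rw [hessQF_comp_clm (L i) hf hT hS (hmaps i) hx]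

end Calculus

section UpperLevelSets

variable {X : Type*} [TopologicalSpace X] {P : Set X} {u : X → ℝ}

theorem tendsto_atBot_of_isClosed_upperLevel (hlb : ∀ r, ∃ p ∈ P, u p < r)
    (hcl : ∀ p ∈ P, IsClosed {x | x ∈ P ∧ u p ≤ u x}) {q : X} (hq : q ∉ P) :
    Tendsto u (𝓝[P] q) atBot := by
  refine tendsto_atBot.2 fun b => ?_
  obtain ⟨p, hp, hpb⟩ := hlb b
  have hout : {x | x ∈ P ∧ u p ≤ u x}ᶜ ∈ 𝓝 q :=
    (hcl p hp).isOpen_compl.mem_nhds fun h => hq h.1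
  filter_upwards [mem_nhdsWithin_of_mem_nhds hout, self_mem_nhdsWithin] with x hx hxP
  exact (lt_of_not_ge fun h => hx ⟨hxP, h⟩).le.trans hpb.le

theorem isClosed_upperLevel_of_tendsto_atBot (hu : ContinuousOn u P)
    (hbot : ∀ q ∉ P, Tendsto u (𝓝[P] q) atBot) (c : ℝ) : IsClosed {x | x ∈ P ∧ c ≤ u x} := by
  refine closure_subset_iff_isClosed.1 fun q hq => ?_
  have := mem_closure_iff_nhdsWithin_neBot.1 hq
  have hge : ∀ᶠ x in 𝓝[{x | x ∈ P ∧ c ≤ u x}] q, c ≤ u x :=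
    eventually_mem_nhdsWithin.mono fun x hx => hx.2
  have hle : 𝓝[{x | x ∈ P ∧ c ≤ u x}] q ≤ 𝓝[P] q := nhdsWithin_mono q fun x hx => hx.1
  by_cases hqP : q ∈ P
  · exact ⟨hqP, ge_of_tendsto ((hu q hqP).tendsto.mono_left hle) hge⟩
  · obtain ⟨x, hcx, hxc⟩ :=
      (hge.and (((hbot q hqP).mono_left hle).eventually (eventually_lt_atBot c))).exists
    exact absurd (hcx.trans_lt hxc) (lt_irrefl c)

theorem isBoundedUnder_le_of_tendsto_atBot (hu : ContinuousOn u P)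
    (hbot : ∀ q ∉ P, Tendsto u (𝓝[P] q) atBot) (q : X) : IsBoundedUnder (· ≤ ·) (𝓝[P] q) u := by
  by_cases hq : q ∈ P
  · exact (hu q hq).tendsto.isBoundedUnder_le
  · exact (hbot q hq).isBoundedUnder_le_atBot

theorem tendsto_sum_mul_atBot {α ι : Type*} [Fintype ι] {l : Filter α} {a : ι → ℝ}
    {f : ι → α → ℝ} (ha : ∀ i, 0 ≤ a i) (hf : ∀ i, IsBoundedUnder (· ≤ ·) l (f i)) {i₀ : ι}
    (hai₀ : 0 < a i₀) (hfi₀ : Tendsto (f i₀) l atBot) :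
    Tendsto (fun x => ∑ i, a i * f i x) l atBot := by
  classical
  have hrest : IsBoundedUnder (· ≤ ·) l (∑ i ∈ Finset.univ.erase i₀, fun x => a i * f i x) :=
    isBoundedUnder_sum (fun _ _ => isBoundedUnder_le_add) le_rfl _ fun i _ =>
      (monotone_mul_left_of_nonneg (ha i)).isBoundedUnder_le_comp (hf i)
  obtain ⟨C, hC⟩ := hrest
  simp_rw [← Finset.add_sum_erase _ _ (Finset.mem_univ i₀)]
  refine tendsto_atBot_add_right_of_ge' l C (hfi₀.const_mul_atBot hai₀) ?_
  simpa only [eventually_map, Finset.sum_apply] using hC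

theorem tendsto_sum_mul_comp_atBot {Y ι : Type*} [TopologicalSpace Y] [Fintype ι] {Q : Set Y}
    {a : ι → ℝ} {L : ι → Y → X} (hu : ContinuousOn u P)
    (hbot : ∀ q ∉ P, Tendsto u (𝓝[P] q) atBot) (ha : ∀ i, 0 < a i) (hL : ∀ i, Continuous (L i))
    (hmaps : ∀ i, MapsTo (L i) Q P) {y : Y} {i₀ : ι} (hy : L i₀ y ∉ P) :
    Tendsto (fun x => ∑ i, a i * u (L i x)) (𝓝[Q] y) atBot := by
  have hLy : ∀ i, Tendsto (L i) (𝓝[Q] y) (𝓝[P] (L i y)) := fun i =>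
    (hL i).continuousWithinAt.tendsto_nhdsWithin (hmaps i)
  exact tendsto_sum_mul_atBot (fun i => (ha i).le)
    (fun i => (hLy i).isBoundedUnder_comp (isBoundedUnder_le_of_tendsto_atBot hu hbot _))
    (ha i₀) ((hbot _ hy).comp (hLy i₀))

end UpperLevelSets

section PairMaps

variable {E : Type*} [NormedAddCommGroup E] [NormedSpace ℝ E] {n : ℕ}

def pairProj (s : Fin n) : (Fin (n + 1) → E) →L[ℝ] E × E :=
  (ContinuousLinearMap.proj 0).prod (ContinuousLinearMap.proj s.succ)

def pairLift : E × E →L[ℝ] Fin (n + 1) → E :=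
  ContinuousLinearMap.pi (Fin.cases (ContinuousLinearMap.fst ℝ E E)
    fun _ => ContinuousLinearMap.snd ℝ E E)

@[simp]
theorem pairProj_apply (s : Fin n) (x : Fin (n + 1) → E) : pairProj s x = (x 0, x s.succ) := rfl

@[simp]
theorem pairLift_apply_zero (z : E × E) : pairLift (n := n) z 0 = z.1 := rfl

@[simp]
theorem pairLift_apply_succ (z : E × E) (s : Fin n) : pairLift z s.succ = z.2 := rfl

theorem pairProj_pairLift (s : Fin n) (z : E × E) : pairProj s (pairLift z) = z := rfl

theorem pairLift_injective [NeZero n] : Function.Injective (pairLift : E × E → Fin (n + 1) → E) :=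
  Function.LeftInverse.injective (g := pairProj 0) (pairProj_pairLift 0)

theorem forall_pairProj_mem_iff [NeZero n] {P : Set E} {x : Fin (n + 1) → E} :
    (∀ s, pairProj s x ∈ P ×ˢ P) ↔ x ∈ univ.pi fun _ => P := by
  refine ⟨fun h k _ => ?_, fun h s => ⟨h 0 trivial, h s.succ trivial⟩⟩
  cases k using Fin.cases with
  | zero => exact (h 0).1
  | succ t => exact (h t).2

theorem mapsTo_pairProj (s : Fin n) (P : Set E) :
    MapsTo (pairProj s) (univ.pi fun _ => P) (P ×ˢ P) :=
  fun _ hx => ⟨hx 0 trivial, hx s.succ trivial⟩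

theorem pairLift_mem_pi_iff [NeZero n] {P : Set E} {z : E × E} :
    pairLift (n := n) z ∈ (univ.pi fun _ => P) ↔ z ∈ P ×ˢ P := by
  simp only [← forall_pairProj_mem_iff, pairProj_pairLift, forall_const]

theorem mapsTo_pairLift [NeZero n] (P : Set E) :
    MapsTo (pairLift (n := n)) (P ×ˢ P) (univ.pi fun _ => P) :=
  fun _ => pairLift_mem_pi_iff.2

theorem exists_pairProj_ne_zero [NeZero n] {v : Fin (n + 1) → E} (hv : v ≠ 0) :
    ∃ s, pairProj s v ≠ 0 := by
  by_contra! h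
  refine hv (funext fun k => ?_)
  cases k using Fin.cases with
  | zero => exact congr_arg Prod.fst (h 0)
  | succ t => exact congr_arg Prod.snd (h t)

theorem pairProj_single_zero (s : Fin n) (w : E) : pairProj s (Pi.single 0 w) = (w, 0) := by
  simp

theorem pairProj_single_succ (s t : Fin n) (w : E) :
    pairProj s (Pi.single t.succ w) = (0, (Pi.single t w : Fin n → E) s) := by
  simp [Pi.single_apply]

theorem pairLift_inl (w : E) : pairLift (n := n) (w, 0) = Pi.single 0 w := by
  funext k
  cases k using Fin.cases <;> simp

theorem pairLift_inr (w : E) : pairLift (n := n) (0, w) = ∑ t : Fin n, Pi.single t.succ w := by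
  funext k
  cases k using Fin.cases <;> simp [Finset.sum_apply, Pi.single_apply]

end PairMaps

section ExpectedUtility

variable {E : Type*} [NormedAddCommGroup E] [NormedSpace ℝ E] {n : ℕ} [NeZero n] {P : Set E}

theorem fderivWithin_comp_pairLift_pos (hP : UniqueDiffOn ℝ P) {U : (Fin (n + 1) → E) → ℝ}
    (hU : DifferentiableOn ℝ U (univ.pi fun _ => P)) {w : E}
    (hpos : ∀ x ∈ univ.pi (fun _ => P), ∀ k,
      0 < fderivWithin ℝ U (univ.pi fun _ => P) x (Pi.single k w))
    {p : E × E} (hp : p ∈ P ×ˢ P) :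
    0 < fderivWithin ℝ (fun z => U (pairLift z)) (P ×ˢ P) p (w, 0) ∧
      0 < fderivWithin ℝ (fun z => U (pairLift z)) (P ×ˢ P) p (0, w) := by
  have hmaps := mapsTo_pairLift (n := n) P
  simp only [fderivWithin_comp_clm_apply pairLift (hU _ (hmaps hp)) hmaps
    ((hP.prod hP) p hp), pairLift_inl, pairLift_inr, map_sum]
  exact ⟨hpos _ (hmaps hp) 0,
    Finset.sum_pos (fun t _ => hpos _ (hmaps hp) t.succ) Finset.univ_nonempty⟩

variable {a : Fin n → ℝ} {u : E × E → ℝ}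

theorem fderivWithin_sum_mul_comp_pairProj_pos (hP : UniqueDiffOn ℝ P) (ha : ∀ s, 0 < a s)
    (hu : DifferentiableOn ℝ u (P ×ˢ P)) {w : E}
    (hpos : ∀ p ∈ P ×ˢ P,
      0 < fderivWithin ℝ u (P ×ˢ P) p (w, 0) ∧ 0 < fderivWithin ℝ u (P ×ˢ P) p (0, w))
    {x : Fin (n + 1) → E} (hx : x ∈ univ.pi fun _ => P) (k : Fin (n + 1)) :
    0 < fderivWithin ℝ (fun y => ∑ s, a s * u (pairProj s y)) (univ.pi fun _ => P) x
      (Pi.single k w) := by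
  rw [fderivWithin_sum_mul_comp_clm_apply a pairProj hu (UniqueDiffOn.univ_pi fun _ => hP)
    (fun s => mapsTo_pairProj s P) hx]
  cases k using Fin.cases with
  | zero =>
    simp only [pairProj_single_zero]
    exact Finset.sum_pos (fun s _ => mul_pos (ha s) (hpos _ (mapsTo_pairProj s P hx)).1)
      Finset.univ_nonempty
  | succ t =>
    rw [Finset.sum_eq_single t (fun s _ hst => ?_) (by simp), pairProj_single_succ,
      Pi.single_eq_same]
    · exact mul_pos (ha t) (hpos _ (mapsTo_pairProj t P hx)).2
    · rw [pairProj_single_succ, Pi.single_eq_of_ne hst, Prod.mk_zero_zero, map_zero, mul_zero]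

theorem hessQF_sum_mul_comp_pairProj_neg (hP : UniqueDiffOn ℝ P) (ha : ∀ s, 0 < a s)
    (hu : ContDiffOn ℝ 2 u (P ×ˢ P))
    (hneg : ∀ w ≠ 0, ∀ p ∈ P ×ˢ P, hessQF u (P ×ˢ P) p w < 0)
    {v : Fin (n + 1) → E} (hv : v ≠ 0) {x : Fin (n + 1) → E} (hx : x ∈ univ.pi fun _ => P) :
    hessQF (fun y => ∑ s, a s * u (pairProj s y)) (univ.pi fun _ => P) x v < 0 := by
  rw [hessQF_sum_mul_comp_clm a pairProj hu (hP.prod hP) (UniqueDiffOn.univ_pi fun _ => hP)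
    (fun s => mapsTo_pairProj s P) hx]
  have hle : ∀ s, a s * hessQF u (P ×ˢ P) (pairProj s x) (pairProj s v) ≤ 0 := fun s => by
    by_cases h0 : pairProj s v = 0
    · rw [h0, hessQF_zero, mul_zero]
    · exact (mul_neg_of_pos_of_neg (ha s) (hneg _ h0 _ (mapsTo_pairProj s P hx))).le
  obtain ⟨s₀, hs₀⟩ := exists_pairProj_ne_zero hv
  calc _ < ∑ _s : Fin n, (0 : ℝ) :=
        Finset.sum_lt_sum (fun s _ => hle s) ⟨s₀, Finset.mem_univ _,
          mul_neg_of_pos_of_neg (ha s₀) (hneg _ hs₀ _ (mapsTo_pairProj s₀ P hx))⟩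
    _ = 0 := Finset.sum_const_zero

theorem isClosed_upperLevel_sum_mul_comp_pairProj (ha : ∀ s, 0 < a s)
    (hu : ContinuousOn u (P ×ˢ P)) (hlb : ∀ r, ∃ p ∈ P ×ˢ P, u p < r)
    (hcl : ∀ p ∈ P ×ˢ P, IsClosed {z | z ∈ P ×ˢ P ∧ u p ≤ u z}) (c : ℝ) :
    IsClosed {x | x ∈ univ.pi (fun _ => P) ∧ c ≤ ∑ s, a s * u (pairProj s x)} := by
  have hbot := fun q (hq : q ∉ P ×ˢ P) => tendsto_atBot_of_isClosed_upperLevel hlb hcl hq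
  refine isClosed_upperLevel_of_tendsto_atBot ?_ (fun x hx => ?_) c
  · exact continuousOn_finsetSum _ fun s _ =>
      continuousOn_const.mul (hu.comp (pairProj s).continuous.continuousOn (mapsTo_pairProj s P))
  · obtain ⟨s₀, hs₀⟩ := not_forall.1 (mt forall_pairProj_mem_iff.1 hx)
    exact tendsto_sum_mul_comp_atBot hu hbot ha (fun s => (pairProj s).continuous)
      (fun s => mapsTo_pairProj s P) hs₀

theorem isClosed_upperLevel_comp_pairLift {U : (Fin (n + 1) → E) → ℝ} {c : ℝ}
    (hcl : IsClosed {x | x ∈ univ.pi (fun _ => P) ∧ c ≤ U x}) :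
    IsClosed {z | z ∈ P ×ˢ P ∧ c ≤ U (pairLift z)} := by
  simpa only [preimage_ofPred_eq, pairLift_mem_pi_iff] using hcl.preimage pairLift.continuous

end ExpectedUtility

theorem stmt11_general (C S : ℕ) (hS : 1 ≤ S)
    (a : Fin S → ℝ) (ha : ∀ s, a s ∈ Set.Ioo (0:ℝ) 1) (hsum : ∑ s, a s = 1)
    (u : ((Fin C → ℝ) × (Fin C → ℝ)) → ℝ)
    (P2 : Set ((Fin C → ℝ) × (Fin C → ℝ)))
    (hP2 : P2 = {p | (∀ i, 0 < p.1 i) ∧ (∀ i, 0 < p.2 i)})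
    (PG : Set (Fin (S+1) → (Fin C → ℝ)))
    (hPG : PG = {x | ∀ k i, 0 < x k i})
    (U : (Fin (S+1) → (Fin C → ℝ)) → ℝ)
    (hU : ∀ x, U x = ∑ s : Fin S, a s * u (x 0, x s.succ))
    (hlb : ∀ r : ℝ, ∃ p ∈ P2, u p < r) :
    (ContDiffOn ℝ 2 U PG ∧
     (∀ x ∈ PG, ∀ (k : Fin (S+1)) (i : Fin C),
        0 < fderivWithin ℝ U PG x (Pi.single k (Pi.single i 1))) ∧
     (∀ v : Fin (S+1) → (Fin C → ℝ), v ≠ 0 → ∀ x ∈ PG, hessQF U PG x v < 0) ∧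
     (∀ xb ∈ PG, IsClosed {x | x ∈ PG ∧ U xb ≤ U x})) ↔
    (ContDiffOn ℝ 2 u P2 ∧
     (∀ p ∈ P2, (∀ i, 0 < fderivWithin ℝ u P2 p (Pi.single i 1, 0)) ∧
        (∀ i, 0 < fderivWithin ℝ u P2 p (0, Pi.single i 1))) ∧
     (∀ w : (Fin C → ℝ) × (Fin C → ℝ), w ≠ 0 → ∀ p ∈ P2, hessQF u P2 p w < 0) ∧
     (∀ zb ∈ P2, IsClosed {z | z ∈ P2 ∧ u zb ≤ u z})) := by
  have : NeZero S := ⟨by omega⟩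
  set P : Set (Fin C → ℝ) := univ.pi fun _ => Ioi 0
  have hP : UniqueDiffOn ℝ P := (isOpen_set_pi finite_univ fun _ _ => isOpen_Ioi).uniqueDiffOn
  have hpos : ∀ s, 0 < a s := fun s => (ha s).1
  have hUu : U = fun x => ∑ s, a s * u (pairProj s x) := funext hU
  have huU : u = fun z => U (pairLift z) :=
    funext fun z => by simp [hU, ← Finset.sum_mul, hsum]
  obtain rfl : P2 = P ×ˢ P := by rw [hP2]; ext; simp [P]
  obtain rfl : PG = univ.pi fun _ => P := by rw [hPG]; ext; simp [P]
  have hmaps := mapsTo_pairLift (n := S) P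
  constructor
  · rintro ⟨h1, h2, h3, h4⟩
    rw [huU]
    have h1' := h1.differentiableOn (by norm_num)
    refine ⟨h1.comp (ContinuousLinearMap.contDiff _).contDiffOn hmaps, fun p hp =>
      ⟨fun i => (fderivWithin_comp_pairLift_pos hP h1' (fun x hx k => h2 x hx k i) hp).1,
        fun i => (fderivWithin_comp_pairLift_pos hP h1' (fun x hx k => h2 x hx k i) hp).2⟩,
      fun w hw p hp => ?_, fun zb hzb => isClosed_upperLevel_comp_pairLift (h4 _ (hmaps hzb))⟩
    rw [hessQF_comp_clm pairLift h1 (UniqueDiffOn.univ_pi fun _ => hP) (hP.prod hP) hmaps hp]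
    exact h3 _ ((map_ne_zero_iff _ pairLift_injective).2 hw) _ (hmaps hp)
  · rintro ⟨h1, h2, h3, h4⟩
    rw [hUu]
    refine ⟨ContDiffOn.sum fun s _ => contDiffOn_const.mul
        (h1.comp (ContinuousLinearMap.contDiff _).contDiffOn (mapsTo_pairProj s P)),
      fun x hx k i => fderivWithin_sum_mul_comp_pairProj_pos hP hpos
        (h1.differentiableOn (by norm_num)) (fun p hp => ⟨(h2 p hp).1 i, (h2 p hp).2 i⟩) hx k,
      fun v hv x hx => hessQF_sum_mul_comp_pairProj_neg hP hpos h1 h3 hv hx,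
      fun xb _ => isClosed_upperLevel_sum_mul_comp_pairProj hpos h1.continuousOn hlb h4 _⟩

/-- Theorem: For u lower unbounded and U(x₀,…,x_S) = ∑ₛ aₛ u(x₀,x_s),
U satisfies (i) C², (ii) strictly positive gradient, (iii) negative definite Hessian,
(iv) closed upper level sets, if and only if u satisfies the analogous conditions. -/
theorem stmt11 (C S : ℕ) (hC : 1 ≤ C) (hS : 1 ≤ S)
    (a : Fin S → ℝ) (ha : ∀ s, a s ∈ Set.Ioo (0:ℝ) 1) (hsum : ∑ s, a s = 1)
    (u : ((Fin C → ℝ) × (Fin C → ℝ)) → ℝ)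
    (P2 : Set ((Fin C → ℝ) × (Fin C → ℝ)))
    (hP2 : P2 = {p | (∀ i, 0 < p.1 i) ∧ (∀ i, 0 < p.2 i)})
    (PG : Set (Fin (S+1) → (Fin C → ℝ)))
    (hPG : PG = {x | ∀ k i, 0 < x k i})
    (U : (Fin (S+1) → (Fin C → ℝ)) → ℝ)
    (hU : ∀ x, U x = ∑ s : Fin S, a s * u (x 0, x s.succ))
    (hlb : ∀ r : ℝ, ∃ p ∈ P2, u p < r) :
    (ContDiffOn ℝ 2 U PG ∧
     (∀ x ∈ PG, ∀ (k : Fin (S+1)) (i : Fin C),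
        0 < fderivWithin ℝ U PG x (Pi.single k (Pi.single i 1))) ∧
     (∀ v : Fin (S+1) → (Fin C → ℝ), v ≠ 0 → ∀ x ∈ PG, hessQF U PG x v < 0) ∧
     (∀ xb ∈ PG, IsClosed {x | x ∈ PG ∧ U xb ≤ U x})) ↔
    (ContDiffOn ℝ 2 u P2 ∧
     (∀ p ∈ P2, (∀ i, 0 < fderivWithin ℝ u P2 p (Pi.single i 1, 0)) ∧
        (∀ i, 0 < fderivWithin ℝ u P2 p (0, Pi.single i 1))) ∧
     (∀ w : (Fin C → ℝ) × (Fin C → ℝ), w ≠ 0 → ∀ p ∈ P2, hessQF u P2 p w < 0) ∧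
     (∀ zb ∈ P2, IsClosed {z | z ∈ P2 ∧ u zb ≤ u z})) :=
  stmt11_general C S hS a ha hsum u P2 hP2 PG hPG U hU hlb
end

section
/- Let u be C² on ℝ^{2C}_{++} and U(x₀,…,x_S) = Σ_{s=1}^S a_s u(x₀,x_s) with a_s ∈ (0,1), Σ a_s = 1. If U satisfies the weak concavity condition (for every nonzero v ∈ ℝ^{C(S+1)} and x ∈ ℝ^{C(S+1)}_{++}, DU(x)·v = 0 implies v·D²U(x)·v < 0), then u satisfies the analogous condition: for every nonzero w ∈ ℝ^{2C} and (x,y) ∈ ℝ^{2C}_{++}, Du(x,y)·w = 0 implies w·D²u(x,y)·w < 0. -/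
open Set

section
variable {E F : Type*} [NormedAddCommGroup E] [NormedSpace ℝ E]
  [NormedAddCommGroup F] [NormedSpace ℝ F]

theorem hessQF_of_isOpen {f : E → ℝ} {s : Set E} (hs : IsOpen s) {x : E} (hx : x ∈ s)
    (v : E) : hessQF f s x v = fderiv ℝ (fun y => fderiv ℝ f y v) x v := by
  rw [hessQF, fderivWithin_of_isOpen hs hx]
  congr 1
  refine Filter.EventuallyEq.fderiv_eq ?_
  filter_upwards [hs.mem_nhds hx] with y hy
  rw [fderivWithin_of_isOpen hs hy]

theorem fderiv_comp_clm_apply {f : F → ℝ} (L : E →L[ℝ] F) {x : E}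
    (hf : DifferentiableAt ℝ f (L x)) (v : E) :
    fderiv ℝ (f ∘ L) x v = fderiv ℝ f (L x) (L v) := by
  rw [fderiv_comp x hf L.differentiableAt, L.fderiv]
  rfl

variable {f : F → ℝ} {L : E →L[ℝ] F} {s : Set E} {t : Set F}

theorem fderivWithin_comp_clm_apply_of_isOpen (hs : IsOpen s) (ht : IsOpen t)
    (hst : MapsTo L s t) (hf : DifferentiableOn ℝ f t) {x : E} (hx : x ∈ s) (v : E) :
    fderivWithin ℝ (f ∘ L) s x v = fderivWithin ℝ f t (L x) (L v) := by
  rw [fderivWithin_of_isOpen hs hx, fderivWithin_of_isOpen ht (hst hx),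
    fderiv_comp_clm_apply L ((hf _ (hst hx)).differentiableAt (ht.mem_nhds (hst hx)))]

theorem hessQF_comp_clm_of_isOpen (hs : IsOpen s) (ht : IsOpen t) (hst : MapsTo L s t)
    (hf : ContDiffOn ℝ 2 f t) {x : E} (hx : x ∈ s) (v : E) :
    hessQF (f ∘ L) s x v = hessQF f t (L x) (L v) := by
  rw [hessQF_of_isOpen hs hx, hessQF_of_isOpen ht (hst hx)]
  have hdiff : ∀ z ∈ t, DifferentiableAt ℝ f z := fun z hz =>
    (hf.contDiffAt (ht.mem_nhds hz)).differentiableAt (by norm_num)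
  have hfirst : (fun y => fderiv ℝ (f ∘ L) y v) =ᶠ[nhds x]
      (fun z => fderiv ℝ f z (L v)) ∘ L := by
    filter_upwards [hs.mem_nhds hx] with y hy
    exact fderiv_comp_clm_apply L (hdiff _ (hst hy)) v
  have hsecond : DifferentiableAt ℝ (fun z => fderiv ℝ f z (L v)) (L x) :=
    (((hf.contDiffAt (ht.mem_nhds (hst hx))).fderiv_right (m := 1) (by norm_num)).differentiableAt
      (by norm_num)).clm_apply (differentiableAt_const _)
  rw [hfirst.fderiv_eq, fderiv_comp_clm_apply L hsecond]

end

theorem isOpen_setOf_forall_pos {ι : Type*} [Finite ι] : IsOpen {z : ι → ℝ | ∀ i, 0 < z i} := by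
  simp only [ofPred_forall]
  exact isOpen_iInter_of_finite fun i => isOpen_lt continuous_const (continuous_apply i)

section
variable (E : Type*) [NormedAddCommGroup E] [NormedSpace ℝ E]

def consConst (S : ℕ) : E × E →L[ℝ] (Fin (S + 1) → E) :=
  ContinuousLinearMap.pi (Fin.cases (ContinuousLinearMap.fst ℝ E E)
    fun _ => ContinuousLinearMap.snd ℝ E E)

@[simp]
theorem consConst_apply_zero (S : ℕ) (q : E × E) : consConst E S q 0 = q.1 := rfl

@[simp]
theorem consConst_apply_succ {S : ℕ} (q : E × E) (s : Fin S) : consConst E S q s.succ = q.2 :=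
  rfl

theorem consConst_injective {S : ℕ} (hS : 1 ≤ S) : Function.Injective (consConst E S) :=
  fun _ _ h => Prod.ext (congrFun h 0) (congrFun h (Fin.succ ⟨0, hS⟩ : Fin (S + 1)))

end

theorem stmt12_general (C S : ℕ) (hS : 1 ≤ S)
    (a : Fin S → ℝ) (hsum : ∑ s, a s = 1)
    (u : ((Fin C → ℝ) × (Fin C → ℝ)) → ℝ)
    (P2 : Set ((Fin C → ℝ) × (Fin C → ℝ)))
    (hP2 : P2 = {p | (∀ i, 0 < p.1 i) ∧ (∀ i, 0 < p.2 i)})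
    (PG : Set (Fin (S+1) → (Fin C → ℝ)))
    (hPG : PG = {x | ∀ k i, 0 < x k i})
    (U : (Fin (S+1) → (Fin C → ℝ)) → ℝ)
    (hU : ∀ x, U x = ∑ s : Fin S, a s * u (x 0, x s.succ))
    (hu : ContDiffOn ℝ 2 u P2)
    (hweakU : ∀ v : Fin (S+1) → (Fin C → ℝ), v ≠ 0 → ∀ x ∈ PG,
      fderivWithin ℝ U PG x v = 0 → hessQF U PG x v < 0) :
    ∀ w : (Fin C → ℝ) × (Fin C → ℝ), w ≠ 0 → ∀ p ∈ P2,
      fderivWithin ℝ u P2 p w = 0 → hessQF u P2 p w < 0 := by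
  intro w hw p hp hgrad
  set L := consConst (Fin C → ℝ) S
  have hP2open : IsOpen P2 := hP2 ▸ (isOpen_setOf_forall_pos.preimage continuous_fst).inter
    (isOpen_setOf_forall_pos.preimage continuous_snd)
  have hPGopen : IsOpen PG := by
    rw [hPG, ofPred_forall]
    exact isOpen_iInter_of_finite fun k => isOpen_setOf_forall_pos.preimage (by fun_prop)
  have hLmaps : MapsTo L P2 PG := by
    subst hP2 hPG
    rintro q ⟨hq₁, hq₂⟩ k
    exact Fin.cases hq₁ (fun _ => hq₂) k
  have huU : u = U ∘ L := by
    funext q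
    simp only [Function.comp_apply, hU, L, consConst_apply_zero, consConst_apply_succ,
      ← Finset.sum_mul, hsum, one_mul]
  have hUsmooth : ContDiffOn ℝ 2 U PG := by
    have hU' : U = fun x => ∑ s : Fin S, a s * u (x 0, x s.succ) := funext hU
    refine hU' ▸ ContDiffOn.sum fun s _ => contDiffOn_const.mul (hu.comp (by fun_prop) ?_)
    subst hP2 hPG
    exact fun x hx => ⟨hx 0, hx s.succ⟩
  rw [huU, fderivWithin_comp_clm_apply_of_isOpen hP2open hPGopen hLmaps
    (hUsmooth.differentiableOn (by norm_num)) hp] at hgrad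
  rw [huU, hessQF_comp_clm_of_isOpen hP2open hPGopen hLmaps hUsmooth hp]
  exact hweakU (L w) ((map_ne_zero_iff L (consConst_injective _ hS)).2 hw) (L p) (hLmaps hp) hgrad

/-- If U(x₀,…,x_S) = ∑ₛ aₛ u(x₀,x_s) satisfies the weak concavity
condition (DU(x)·v = 0 ⟹ v·D²U(x)·v < 0 for nonzero v), then u satisfies the
analogous condition on ℝ^{2C}_{++}. -/
theorem stmt12 (C S : ℕ) (hC : 1 ≤ C) (hS : 1 ≤ S)
    (a : Fin S → ℝ) (ha : ∀ s, a s ∈ Set.Ioo (0:ℝ) 1) (hsum : ∑ s, a s = 1)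
    (u : ((Fin C → ℝ) × (Fin C → ℝ)) → ℝ)
    (P2 : Set ((Fin C → ℝ) × (Fin C → ℝ)))
    (hP2 : P2 = {p | (∀ i, 0 < p.1 i) ∧ (∀ i, 0 < p.2 i)})
    (PG : Set (Fin (S+1) → (Fin C → ℝ)))
    (hPG : PG = {x | ∀ k i, 0 < x k i})
    (U : (Fin (S+1) → (Fin C → ℝ)) → ℝ)
    (hU : ∀ x, U x = ∑ s : Fin S, a s * u (x 0, x s.succ))
    (hu : ContDiffOn ℝ 2 u P2)
    (hweakU : ∀ v : Fin (S+1) → (Fin C → ℝ), v ≠ 0 → ∀ x ∈ PG,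
      fderivWithin ℝ U PG x v = 0 → hessQF U PG x v < 0) :
    ∀ w : (Fin C → ℝ) × (Fin C → ℝ), w ≠ 0 → ∀ p ∈ P2,
      fderivWithin ℝ u P2 p w = 0 → hessQF u P2 p w < 0 :=
  stmt12_general C S hS a hsum u P2 hP2 PG hPG U hU hu hweakU
end
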